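/- On ℝ⁶ with coordinates (x₁,…,x₆) = (γ₁,γ₂,γ₃,M₁,M₂,M₃), let T₁ be the constant trivector with components T₁^{abc} = ∑_{i,j,k=1}^{3} ε_{ijk} (∂_i ∧ ∂_j ∧ ∂_{k+3})^{abc}, where for standard basis vectors u,v,w the wedge component is (u∧v∧w)^{abc} = u_a(v_bw_c − v_cw_b) − u_b(v_aw_c − v_cw_a) + u_c(v_aw_b − v_bw_a). Then for the Lagrange vector field X = (2(γ₃M₂−γ₂M₃), 2(γ₁M₃−γ₃M₁), 2(γ₂M₁−γ₁M₂), −aγ₂, aγ₁, 0), the first integrals f₁ = γ₁²+γ₂²+γ₃² and f₃ = M₁²+M₂²+M₃²+aγ₃, and the antisymmetric matrix field P₁ with upper entries (1,2) ↦ −M₃, (1,3) ↦ M₂, (1,5) ↦ −a/2, (2,3) ↦ −M₁, (2,4) ↦ a/2 (others 0): (a) ∑_{b,c=1}^{6} T₁^{abc} (∂f₁/∂x_b)(∂f₃/∂x_c) = −4 X_a for every a and every point; (b) ∑_{c=1}^{6} T₁^{abc} ∂f₃/∂x_c = −4 (P₁)_{ab} for all a,b; (c) the conditional invariance ∑_{c=1}^{6}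 (L_X T₁)^{abc} ∂f₃/∂x_c = 0 holds for all a,b, where (L_X T₁)^{abc} = −∑_ℓ ( (∂X_a/∂x_ℓ) T₁^{ℓbc} + (∂X_b/∂x_ℓ) T₁^{aℓc} + (∂X_c/∂x_ℓ) T₁^{abℓ} ). -/

import Mathlib

noncomputable section

open scoped BigOperators

/-- Partial derivative of `f` in the `i`-th coordinate direction at `x`. -/
def pd {n : ℕ} (i : Fin n) (f : (Fin n → ℝ) → ℝ) (x : Fin n → ℝ) : ℝ :=
  fderiv ℝ f x (Pi.single i 1)

/-- The Lagrange vector field on `ℝ⁶` with coordinates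
`(x₁,…,x₆) = (γ₁,γ₂,γ₃,M₁,M₂,M₃)`. -/
def lagX (a : ℝ) (x : Fin 6 → ℝ) : Fin 6 → ℝ :=
  ![2 * (x 2 * x 4 - x 1 * x 5), 2 * (x 0 * x 5 - x 2 * x 3),
    2 * (x 1 * x 3 - x 0 * x 4), -(a * x 1), a * x 0, 0]

/-- `f₁ = γ₁² + γ₂² + γ₃²`. -/
def lagF₁ (x : Fin 6 → ℝ) : ℝ := x 0 ^ 2 + x 1 ^ 2 + x 2 ^ 2

/-- `f₂ = γ₁M₁ + γ₂M₂ + γ₃M₃`. -/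
def lagF₂ (x : Fin 6 → ℝ) : ℝ := x 0 * x 3 + x 1 * x 4 + x 2 * x 5

/-- `f₃ = M₁² + M₂² + M₃² + aγ₃`. -/
def lagF₃ (a : ℝ) (x : Fin 6 → ℝ) : ℝ := x 3 ^ 2 + x 4 ^ 2 + x 5 ^ 2 + a * x 2

/-- `f₄ = M₃`. -/
def lagF₄ (x : Fin 6 → ℝ) : ℝ := x 5

/-- Contraction of a matrix field with the gradient of a function:
`(P∇f)_i = ∑_j P_{ij} ∂f/∂x_j`. -/
def Pgrad {n : ℕ} (P : (Fin n → ℝ) → Matrix (Fin n) (Fin n) ℝ)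
    (f : (Fin n → ℝ) → ℝ) (x : Fin n → ℝ) (i : Fin n) : ℝ :=
  ∑ j, P x i j * pd j f x

/-- Lie derivative of a (2,0) tensor (matrix field) `P` along the vector field `X`:
`(L_X P)_{ij} = ∑_k (X_k ∂P_{ij}/∂x_k − P_{kj} ∂X_i/∂x_k − P_{ik} ∂X_j/∂x_k)`. -/
def matLie {n : ℕ} (X : (Fin n → ℝ) → Fin n → ℝ)
    (P : (Fin n → ℝ) → Matrix (Fin n) (Fin n) ℝ) (x : Fin n → ℝ) (i j : Fin n) : ℝ :=
  ∑ k, (X x k * pd k (fun y => P y i j) x - P x k j * pd k (fun y => X y i) x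
        - P x i k * pd k (fun y => X y j) x)

/-- The Jacobiator of an antisymmetric matrix field; it vanishes identically iff `P`
satisfies the Jacobi identity (i.e. is a Poisson bivector). -/
def jacobiator {n : ℕ} (P : (Fin n → ℝ) → Matrix (Fin n) (Fin n) ℝ)
    (x : Fin n → ℝ) (i j k : Fin n) : ℝ :=
  ∑ l, (P x l i * pd l (fun y => P y j k) x + P x l j * pd l (fun y => P y k i) x
        + P x l k * pd l (fun y => P y i j) x)

/-- The Levi-Civita symbol on three indices, `ε₀₁₂ = 1` (0-based). -/
def eps (i j k : Fin 3) : ℝ :=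
  (((j : ℕ) : ℝ) - ((i : ℕ) : ℝ)) * (((k : ℕ) : ℝ) - ((j : ℕ) : ℝ)) *
    (((k : ℕ) : ℝ) - ((i : ℕ) : ℝ)) / 2

/-- Components of the wedge product of three vectors:
`(u∧v∧w)^{abc} = u_a(v_bw_c − v_cw_b) − u_b(v_aw_c − v_cw_a) + u_c(v_aw_b − v_bw_a)`. -/
def wedge3 (u v w : Fin 6 → ℝ) (a b c : Fin 6) : ℝ :=
  u a * (v b * w c - v c * w b) - u b * (v a * w c - v c * w a)
    + u c * (v a * w b - v b * w a)

/-- The `i`-th standard basis vector `∂_i` of `ℝ⁶`. -/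
def e6 (i : Fin 6) : Fin 6 → ℝ := fun j => if j = i then 1 else 0

/-- Embedding of an index `i ∈ {1,2,3}` as the index of `∂_i` in `ℝ⁶`. -/
def lo (i : Fin 3) : Fin 6 := ⟨(i : ℕ), by have := i.isLt; omega⟩

/-- Embedding of an index `i ∈ {1,2,3}` as the index of `∂_{i+3}` in `ℝ⁶`. -/
def hi (i : Fin 3) : Fin 6 := ⟨(i : ℕ) + 3, by have := i.isLt; omega⟩

/-- Lie derivative along `X` of a trivector `T` with constant components:
`(L_X T)^{abc} = −∑_ℓ ((∂X_a/∂x_ℓ)T^{ℓbc} + (∂X_b/∂x_ℓ)T^{aℓc} + (∂X_c/∂x_ℓ)T^{abℓ})`. -/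
def triLie (X : (Fin 6 → ℝ) → Fin 6 → ℝ) (T : Fin 6 → Fin 6 → Fin 6 → ℝ)
    (x : Fin 6 → ℝ) (a b c : Fin 6) : ℝ :=
  -∑ l, (pd l (fun y => X y a) x * T l b c + pd l (fun y => X y b) x * T a l c
        + pd l (fun y => X y c) x * T a b l)

/-- The constant trivector `T₁ = ∑_{i,j,k} ε_{ijk} ∂_i ∧ ∂_j ∧ ∂_{k+3}`. -/
def lagT₁ (a b c : Fin 6) : ℝ :=
  ∑ i : Fin 3, ∑ j : Fin 3, ∑ k : Fin 3,
    eps i j k * wedge3 (e6 (lo i)) (e6 (lo j)) (e6 (hi k)) a b c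

/-- The invariant Poisson bivector `P₁` of the Lagrange case. -/
def lagP₁ (a : ℝ) (x : Fin 6 → ℝ) : Matrix (Fin 6) (Fin 6) ℝ :=
  !![0, -(x 5), x 4, 0, -(a / 2), 0;
     x 5, 0, -(x 3), a / 2, 0, 0;
     -(x 4), x 3, 0, 0, 0, 0;
     0, -(a / 2), 0, 0, 0, 0;
     a / 2, 0, 0, 0, 0, 0;
     0, 0, 0, 0, 0, 0]

/-!
Contracting `T₁ = 2 (∂₁∧∂₂∧∂₆ + ∂₂∧∂₃∧∂₄ + ∂₃∧∂₁∧∂₅)` in its last slot with a covector `ξ` gives an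
explicit bivector `ι_ξ T₁`, linear in `ξ`, and `ι_{df₃} T₁ = −4 P₁` is part (b). Part (a) follows
from (b) because `P₁ df₁ = X`. For (c), with `J` the Jacobian of `X`, the contraction of `L_X T₁`
with `df₃` is `−(J C + C Jᵀ + ι_η T₁)` where `C = ι_{df₃} T₁ = −4 P₁` and `η = Jᵀ df₃`; as
`X f₃ = 0`, `η = −(Hess f₃) X`, and the three terms cancel.
-/

section PartialDerivative

variable {n : ℕ} {f g : (Fin n → ℝ) → ℝ} {x : Fin n → ℝ} (i : Fin n)

lemma pd_coord (j : Fin n) : pd i (fun y => y j) x = (Pi.single i 1 : Fin n → ℝ) j := by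
  rw [pd, (hasFDerivAt_apply j x).fderiv]
  rfl

lemma pd_const (c : ℝ) : pd i (fun _ => c) x = 0 := by
  simp [pd]

lemma pd_add (hf : DifferentiableAt ℝ f x) (hg : DifferentiableAt ℝ g x) :
    pd i (fun y => f y + g y) x = pd i f x + pd i g x := by
  rw [pd, fderiv_fun_add hf hg]; rfl

lemma pd_sub (hf : DifferentiableAt ℝ f x) (hg : DifferentiableAt ℝ g x) :
    pd i (fun y => f y - g y) x = pd i f x - pd i g x := by
  rw [pd, fderiv_fun_sub hf hg]; rfl

lemma pd_neg : pd i (fun y => -f y) x = -pd i f x := by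
  simp [pd, fderiv_fun_neg]

lemma pd_mul (hf : DifferentiableAt ℝ f x) (hg : DifferentiableAt ℝ g x) :
    pd i (fun y => f y * g y) x = f x * pd i g x + g x * pd i f x := by
  rw [pd, fderiv_fun_mul hf hg]; rfl

lemma pd_const_mul (hf : DifferentiableAt ℝ f x) (c : ℝ) :
    pd i (fun y => c * f y) x = c * pd i f x := by
  simp [pd, fderiv_const_mul hf]

lemma pd_pow (hf : DifferentiableAt ℝ f x) (m : ℕ) :
    pd i (fun y => f y ^ m) x = m * f x ^ (m - 1) * pd i f x := by
  rw [pd, fderiv_fun_pow m hf]; simp [pd]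

end PartialDerivative

lemma pd_lagF₁ (x : Fin 6 → ℝ) (j : Fin 6) :
    pd j lagF₁ x = ![2 * x 0, 2 * x 1, 2 * x 2, 0, 0, 0] j := by
  unfold lagF₁
  simp (disch := fun_prop) only [pd_add, pd_pow, pd_coord]
  fin_cases j <;> simp

lemma pd_lagF₃ (a : ℝ) (x : Fin 6 → ℝ) (j : Fin 6) :
    pd j (lagF₃ a) x = ![0, 0, a, 2 * x 3, 2 * x 4, 2 * x 5] j := by
  unfold lagF₃
  simp (disch := fun_prop) only [pd_add, pd_pow, pd_const_mul, pd_coord]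
  fin_cases j <;> simp

def lagJac (a : ℝ) (x : Fin 6 → ℝ) : Matrix (Fin 6) (Fin 6) ℝ :=
  !![0, -2 * x 5, 2 * x 4, 0, 2 * x 2, -2 * x 1;
     2 * x 5, 0, -2 * x 3, -2 * x 2, 0, 2 * x 0;
     -2 * x 4, 2 * x 3, 0, 2 * x 1, -2 * x 0, 0;
     0, -a, 0, 0, 0, 0;
     a, 0, 0, 0, 0, 0;
     0, 0, 0, 0, 0, 0]

lemma pd_lagX (a : ℝ) (x : Fin 6 → ℝ) (i l : Fin 6) :
    pd l (fun y => lagX a y i) x = lagJac a x i l := by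
  fin_cases i <;>
    simp (disch := fun_prop) only [lagX, Fin.zero_eta, Fin.mk_one, Fin.reduceFinMk,
      Matrix.cons_val, pd_sub, pd_mul, pd_neg, pd_coord, pd_const] <;>
    fin_cases l <;> simp [lagJac]

def wedge2 (u v : Fin 6 → ℝ) (a b : Fin 6) : ℝ := u a * v b - u b * v a

lemma wedge3_swap (u v w : Fin 6 → ℝ) (a b c : Fin 6) :
    wedge3 v u w a b c = -wedge3 u v w a b c := by
  simp only [wedge3]; ring

lemma sum_wedge3_mul (u v w ξ : Fin 6 → ℝ) (a b : Fin 6) :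
    ∑ c, wedge3 u v w a b c * ξ c =
      (w ⬝ᵥ ξ) * wedge2 u v a b - (v ⬝ᵥ ξ) * wedge2 u w a b + (u ⬝ᵥ ξ) * wedge2 v w a b := by
  simp only [wedge3, wedge2, dotProduct, Fin.sum_univ_six]; ring

lemma e6_dotProduct (i : Fin 6) (ξ : Fin 6 → ℝ) : e6 i ⬝ᵥ ξ = ξ i := by
  simp [e6, dotProduct]

lemma lagT₁_eq (a b c : Fin 6) : lagT₁ a b c = 2 * (wedge3 (e6 0) (e6 1) (e6 5) a b c
    + wedge3 (e6 1) (e6 2) (e6 3) a b c + wedge3 (e6 2) (e6 0) (e6 4) a b c) := by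
  have hlo : lo 0 = 0 ∧ lo 1 = 1 ∧ lo 2 = 2 := by decide
  have hhi : hi 0 = 3 ∧ hi 1 = 4 ∧ hi 2 = 5 := by decide
  simp only [lagT₁, Fin.sum_univ_three, hlo, hhi]
  norm_num [eps]
  rw [wedge3_swap (e6 0) (e6 2), wedge3_swap (e6 2) (e6 1), wedge3_swap (e6 1) (e6 0)]
  ring

def lagT₁Contract (ξ : Fin 6 → ℝ) : Matrix (Fin 6) (Fin 6) ℝ :=
  2 • !![0, ξ 5, -ξ 4, 0, ξ 2, -ξ 1;
     -ξ 5, 0, ξ 3, -ξ 2, 0, ξ 0;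
     ξ 4, -ξ 3, 0, ξ 1, -ξ 0, 0;
     0, ξ 2, -ξ 1, 0, 0, 0;
     -ξ 2, 0, ξ 0, 0, 0, 0;
     ξ 1, -ξ 0, 0, 0, 0, 0]

lemma sum_lagT₁_mul (ξ : Fin 6 → ℝ) (a b : Fin 6) :
    ∑ c, lagT₁ a b c * ξ c = lagT₁Contract ξ a b := by
  simp only [lagT₁_eq, mul_assoc, ← Finset.mul_sum, add_mul, Finset.sum_add_distrib,
    sum_wedge3_mul, e6_dotProduct]
  fin_cases a <;> fin_cases b <;> simp [wedge2, e6, lagT₁Contract]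

lemma sum_triLie_mul (X : (Fin 6 → ℝ) → Fin 6 → ℝ) (T : Fin 6 → Fin 6 → Fin 6 → ℝ)
    (x ξ : Fin 6 → ℝ) (a b : Fin 6) :
    ∑ c, triLie X T x a b c * ξ c =
      -(∑ l, pd l (fun y => X y a) x * ∑ c, T l b c * ξ c
        + ∑ l, pd l (fun y => X y b) x * ∑ c, T a l c * ξ c
        + ∑ l, T a b l * ∑ c, pd l (fun y => X y c) x * ξ c) := by
  simp only [triLie, neg_mul, Finset.sum_neg_distrib, add_mul, Finset.sum_add_distrib,
    Finset.mul_sum, Finset.sum_mul]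
  rw [Finset.sum_comm (f := fun c l => pd l (fun y => X y a) x * T l b c * ξ c),
    Finset.sum_comm (f := fun c l => pd l (fun y => X y b) x * T a l c * ξ c),
    Finset.sum_comm (f := fun c l => pd l (fun y => X y c) x * T a b l * ξ c)]
  simp only [mul_assoc, mul_left_comm]

lemma lagP₁_gradF₁ (a : ℝ) (x : Fin 6 → ℝ) : Pgrad (lagP₁ a) lagF₁ x = lagX a x := by
  ext i
  simp only [Pgrad, pd_lagF₁, Fin.sum_univ_six]
  fin_cases i <;> simp [lagP₁, lagX] <;> ring

lemma sum_lagT₁_mul_pd_lagF₃ (a : ℝ) (x : Fin 6 → ℝ) (i j : Fin 6) :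
    ∑ k, lagT₁ i j k * pd k (lagF₃ a) x = -4 * lagP₁ a x i j := by
  rw [sum_lagT₁_mul]
  fin_cases i <;> fin_cases j <;> simp [lagT₁Contract, pd_lagF₃, lagP₁] <;> ring

lemma sum_pd_lagX_mul_pd_lagF₃ (a : ℝ) (x : Fin 6 → ℝ) (l : Fin 6) :
    ∑ k, pd l (fun y => lagX a y k) x * pd k (lagF₃ a) x
      = ![0, 0, 0, 2 * a * x 1, -(2 * a * x 0), 0] l := by
  simp only [pd_lagX, pd_lagF₃, Fin.sum_univ_six]
  fin_cases l <;> simp [lagJac] <;> ring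

/-- The conditional numerical invariant `T₁` of the Lagrange case:
(a) `T₁ df₁ df₃ = −4X`; (b) `T₁ df₃ = −4P₁`; (c) `(L_X T₁) df₃ = 0`. -/
theorem lagrange_T1 (a : ℝ) (x : Fin 6 → ℝ) :
    (∀ i : Fin 6, ∑ j, ∑ k, lagT₁ i j k * pd j lagF₁ x * pd k (lagF₃ a) x
      = -4 * lagX a x i) ∧
    (∀ i j : Fin 6, ∑ k, lagT₁ i j k * pd k (lagF₃ a) x = -4 * lagP₁ a x i j) ∧
    (∀ i j : Fin 6, ∑ k, triLie (lagX a) lagT₁ x i j k * pd k (lagF₃ a) x = 0) := by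
  refine ⟨fun i => ?_, sum_lagT₁_mul_pd_lagF₃ a x, fun i j => ?_⟩
  · calc ∑ j, ∑ k, lagT₁ i j k * pd j lagF₁ x * pd k (lagF₃ a) x
        = ∑ j, (∑ k, lagT₁ i j k * pd k (lagF₃ a) x) * pd j lagF₁ x := by
          simp only [Finset.sum_mul, mul_right_comm]
      _ = -4 * Pgrad (lagP₁ a) lagF₁ x i := by
          simp only [sum_lagT₁_mul_pd_lagF₃, Pgrad, Finset.mul_sum, mul_assoc]
      _ = -4 * lagX a x i := by rw [lagP₁_gradF₁]
  · rw [sum_triLie_mul]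
    simp only [sum_lagT₁_mul_pd_lagF₃, sum_pd_lagX_mul_pd_lagF₃]
    rw [sum_lagT₁_mul]
    simp only [pd_lagX, Fin.sum_univ_six]
    fin_cases i <;> fin_cases j <;> simp [lagJac, lagP₁, lagT₁Contract] <;> ring
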